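/- arXiv:math/0610981 — 2 statements merged into one kernel-verified Lean document; each statement's English description precedes it below -/
import Mathlib

section
/- Let G be an additive abelian group with cyclic torsion subgroup, let m be an even positive integer, and let A₁,…,A_m be subsets of G each of cardinality n ≥ 1 such that every element of A_m has odd (finite) order. Then the elements of each A_i can be listed as a_{i1},…,a_{in} so that the sums ∑_{i=1}^m a_{ij} (1 ≤ j ≤ n) are pairwise distinct. -/
/-!
Map the subgroup generated by the `A i` injectively into the multiplicative group of a field of
characteristic zero: it is finitely generated with cyclic torsion, hence `ℤᵏ × ℤ/N`, and
`(v, t) ↦ Xᵛ exp (2πit/N)` embeds this into the fraction field of `ℂ[ℤᵏ]`. Sums become products, so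
with `x i` the images of the `A i`, `c` those of the last set and `L = m - 1` odd, it suffices to
make the products `c j * ∏ i, x i (π i j)` pairwise distinct. Sun's identity
  `∑ π, (∏ i, sign (π i)) * det V(c j * ∏ i, x i (π i j)) = per V(c) * ∏ i, det V(x i)`
holds for odd `L` because each sign then occurs to the even power `L + 1`. The determinants on the
right are nonzero since the `x i` are injective, and `per V(c) ≠ 0` since the `c j` are distinct
roots of unity of odd order. Hence some Vandermonde determinant on the left is nonzero, i.e. has
distinct nodes.
-/

open Finset Function Equiv Matrix Polynomial AddCommGroup

namespace Matrix

variable {R : Type*} [CommRing R] {n : ℕ}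

theorem det_vandermonde_eq_sum (v : Fin n → R) :
    (vandermonde v).det =
      ∑ σ : Perm (Fin n), (Perm.sign σ : R) * ∏ j, v (σ j) ^ (j : ℕ) := by
  simp [det_apply, vandermonde, Units.smul_def, zsmul_eq_mul]

theorem sum_sign_mul_prod_pow_comp (v : Fin n → R) (σ : Perm (Fin n)) :
    ∑ τ : Perm (Fin n), (Perm.sign τ : R) * ∏ j, v (τ (σ j)) ^ (j : ℕ) =
      Perm.sign σ * (vandermonde v).det := by
  rw [det_vandermonde_eq_sum, mul_sum, ← Equiv.sum_comp (Equiv.mulRight σ⁻¹)]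
  refine sum_congr rfl fun ρ _ => ?_
  simp only [coe_mulRight, Perm.sign_mul, Perm.mul_apply, Perm.inv_def, symm_apply_apply,
    Perm.sign_symm]
  push_cast
  ring

theorem sum_prod_sign_mul_det_vandermonde {L : ℕ} (hL : Odd L) (a : Fin L → Fin n → R)
    (c : Fin n → R) :
    ∑ π : Fin L → Perm (Fin n), (∏ i, (Perm.sign (π i) : R)) *
        (vandermonde fun j => c j * ∏ i, a i (π i j)).det =
      (vandermonde c).permanent * ∏ i, (vandermonde (a i)).det := by
  have hsign : ∀ σ : Perm (Fin n), (Perm.sign σ : R) * (Perm.sign σ : R) ^ L = 1 := by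
    intro σ
    obtain ⟨t, rfl⟩ := hL
    rw [← pow_succ', show 2 * t + 1 + 1 = 2 * (t + 1) by ring, pow_mul, ← Int.cast_pow,
      ← Units.val_pow_eq_pow_val, Int.units_sq]
    simp
  calc _ = ∑ π : Fin L → Perm (Fin n), ∑ σ : Perm (Fin n),
          ((Perm.sign σ : R) * ∏ j, c (σ j) ^ (j : ℕ)) *
            ∏ i, ((Perm.sign (π i) : R) * ∏ j, a i (π i (σ j)) ^ (j : ℕ)) := by
        refine sum_congr rfl fun π _ => ?_
        rw [det_vandermonde_eq_sum, mul_sum]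
        refine sum_congr rfl fun σ _ => ?_
        simp_rw [mul_pow, prod_mul_distrib, ← prod_pow]
        rw [prod_comm (s := univ) (t := univ)
          (f := fun (j : Fin n) (i : Fin L) => a i (π i (σ j)) ^ (j : ℕ))]
        ring
    _ = ∑ σ : Perm (Fin n), ((Perm.sign σ : R) * ∏ j, c (σ j) ^ (j : ℕ)) *
          ∏ i, ((Perm.sign σ : R) * (vandermonde (a i)).det) := by
        rw [sum_comm]
        refine sum_congr rfl fun σ _ => ?_
        simp_rw [← sum_sign_mul_prod_pow_comp]
        rw [← mul_sum, prod_univ_sum, Fintype.piFinset_univ]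
    _ = ∑ σ : Perm (Fin n), (∏ j, c (σ j) ^ (j : ℕ)) * ∏ i, (vandermonde (a i)).det := by
        refine sum_congr rfl fun σ _ => ?_
        rw [prod_mul_distrib, prod_const, card_univ, Fintype.card_fin]
        linear_combination
          (∏ j, c (σ j) ^ (j : ℕ)) * (∏ i, (vandermonde (a i)).det) * hsign σ
    _ = _ := by
        rw [← sum_mul]
        rfl

theorem permanent_eq_det_of_charP_two [CharP R 2] {ι : Type*} [Fintype ι] [DecidableEq ι]
    (M : Matrix ι ι R) : M.permanent = M.det := by
  rw [permanent, det_apply]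
  refine sum_congr rfl fun σ _ => ?_
  rcases Int.units_eq_one_or (Perm.sign σ) with h | h <;> simp [h, CharTwo.neg_eq]

end Matrix

theorem IsPrimitiveRoot.aeval_eq_zero_of_aeval_eq_zero {K S : Type*} [Field K] [CharZero K]
    [CommRing S] [IsDomain S] {d : ℕ} (hd : 0 < d) {ζ : K} (hζ : IsPrimitiveRoot ζ d) {w : S}
    (hw : IsPrimitiveRoot w d) {P : ℤ[X]} (hP : aeval ζ P = 0) : aeval w P = 0 := by
  obtain ⟨Q, rfl⟩ : cyclotomic d ℤ ∣ P := by
    rw [cyclotomic_eq_minpoly hζ hd]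
    exact minpoly.isIntegrallyClosed_dvd (hζ.isIntegral hd) hP
  rw [map_mul, aeval_def, eval₂_eq_eval_map, map_cyclotomic, (hw.isRoot_cyclotomic hd).eq_zero,
    zero_mul]

theorem IsPrimitiveRoot.pow_eq_pow_iff_modEq {M : Type*} [CommMonoid M] {ζ : M} {k : ℕ}
    (h : IsPrimitiveRoot ζ k) (hk : k ≠ 0) {a b : ℕ} :
    ζ ^ a = ζ ^ b ↔ a ≡ b [MOD k] := by
  rw [(h.isOfFinOrder hk).pow_eq_pow_iff_modEq, ← h.eq_orderOf]

theorem aeval_permanent_vandermonde_X_pow {S : Type*} [CommRing S] {n : ℕ} (t : Fin n → ℕ)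
    (z : S) : aeval z (vandermonde fun x => (X : ℤ[X]) ^ t x).permanent =
      (vandermonde fun x => z ^ t x).permanent := by
  simp [permanent, vandermonde]

theorem IsPrimitiveRoot.permanent_vandermonde_pow_ne_zero {K : Type*} [Field K] [CharZero K]
    {d : ℕ} (hd : Odd d) {ζ : K} (hζ : IsPrimitiveRoot ζ d) {n : ℕ} {t : Fin n → ℕ}
    (ht : Injective fun x => ζ ^ t x) :
    (vandermonde fun x => ζ ^ t x).permanent ≠ 0 := by
  -- The permanent is the value at `ζ` of an integer polynomial, so it also vanishes at a primitive
  -- `d`-th root of unity `w` in characteristic 2 (which exists as `d` is odd); there the permanent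
  -- is the Vandermonde determinant of the distinct nodes `w ^ t x`.
  have hd0 : 0 < d := hd.pos
  have : NeZero d := ⟨hd0.ne'⟩
  have : NeZero (d : ZMod 2) := ⟨by
    rw [Ne, ZMod.natCast_eq_zero_iff, ← even_iff_two_dvd, Nat.not_even_iff_odd]; exact hd⟩
  let F := CyclotomicField d (ZMod 2)
  have : CharP F 2 := charP_of_injective_algebraMap (algebraMap (ZMod 2) F).injective 2
  have hw := IsCyclotomicExtension.zeta_spec d (ZMod 2) F
  set w := IsCyclotomicExtension.zeta d (ZMod 2) F
  have hwt : Injective fun x => w ^ t x := fun x y hxy =>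
    ht ((hζ.pow_eq_pow_iff_modEq hd0.ne').2 ((hw.pow_eq_pow_iff_modEq hd0.ne').1 hxy))
  intro h0
  have := hζ.aeval_eq_zero_of_aeval_eq_zero hd0 hw
    (by rw [aeval_permanent_vandermonde_X_pow]; exact h0)
  rw [aeval_permanent_vandermonde_X_pow, permanent_eq_det_of_charP_two] at this
  exact det_vandermonde_ne_zero_iff.mpr hwt this

theorem exists_isPrimitiveRoot_odd_forall_pow_eq {K : Type*} [CommRing K] [IsDomain K]
    {ι : Type*} [Fintype ι] (c : ι → K) (hc : ∀ j, Odd (orderOf (c j))) :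
    ∃ d, Odd d ∧ ∃ ζ : K, IsPrimitiveRoot ζ d ∧ ∀ j, ∃ t : ℕ, ζ ^ t = c j := by
  set d := ∏ j, orderOf (c j)
  have hd : Odd d := prod_induction _ Odd (fun _ _ => Odd.mul) odd_one fun j _ => hc j
  have : NeZero d := ⟨hd.pos.ne'⟩
  have hcd : ∀ j, c j ^ d = 1 := fun j =>
    orderOf_dvd_iff_pow_eq_one.1 (dvd_prod_of_mem _ (mem_univ j))
  obtain ⟨g, hg⟩ := IsCyclic.exists_generator (α := rootsOfUnity d K)
  set ζ : K := ((g : Kˣ) : K)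
  have hζd : ζ ^ d = 1 := by
    rw [← Units.val_pow_eq_pow_val, (mem_rootsOfUnity d _).1 g.2, Units.val_one]
  refine ⟨orderOf ζ, hd.of_dvd_nat (orderOf_dvd_of_pow_eq_one hζd), ζ,
    IsPrimitiveRoot.orderOf ζ, fun j => ?_⟩
  obtain ⟨t, ht⟩ := mem_powers_iff_mem_zpowers.2 (hg (rootsOfUnity.mkOfPowEq (c j) (hcd j)))
  exact ⟨t, by simpa [ζ] using congrArg (fun u : rootsOfUnity d K => ((u : Kˣ) : K)) ht⟩

theorem permanent_vandermonde_ne_zero_of_odd_orderOf {K : Type*} [Field K] [CharZero K] {n : ℕ}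
    {c : Fin n → K} (hc : Injective c) (hodd : ∀ j, Odd (orderOf (c j))) :
    (vandermonde c).permanent ≠ 0 := by
  obtain ⟨d, hd, ζ, hζ, ht⟩ := exists_isPrimitiveRoot_odd_forall_pow_eq c hodd
  choose t ht using ht
  obtain rfl : (fun x => ζ ^ t x) = c := funext ht
  exact hζ.permanent_vandermonde_pow_ne_zero hd hc

theorem AddChar.map_sum_eq_prod {A M : Type*} [AddCommMonoid A] [CommMonoid M]
    (ψ : AddChar A M) {ι : Type*} (s : Finset ι) (f : ι → A) :
    ψ (∑ i ∈ s, f i) = ∏ i ∈ s, ψ (f i) := by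
  induction s using Finset.cons_induction <;> simp [*, map_add_eq_mul]

theorem AddChar.orderOf_apply_of_injective {A M : Type*} [AddMonoid A] [Monoid M] {ψ : AddChar A M}
    (hψ : Injective ψ) (a : A) : orderOf (ψ a) = addOrderOf a := by
  rw [← orderOf_ofAdd_eq_addOrderOf, ← orderOf_injective ψ.toMonoidHom hψ]
  rfl

theorem isAddCyclic_of_injective_of_isOfFinAddOrder {A G : Type*} [AddGroup A] [AddCommGroup G]
    (htor : IsAddCyclic (torsion G)) (f : A →+ G) (hf : Injective f)
    (hfin : ∀ a, IsOfFinAddOrder (f a)) : IsAddCyclic A :=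
  isAddCyclic_of_injective (f.codRestrict (torsion G) hfin) fun _ _ h =>
    hf (congrArg Subtype.val h :)

theorem AddSubgroup.isAddCyclic_torsion {G : Type*} [AddCommGroup G]
    (htor : IsAddCyclic (torsion G)) (H : AddSubgroup G) : IsAddCyclic (torsion H) :=
  isAddCyclic_of_injective_of_isOfFinAddOrder htor (H.subtype.comp (torsion H).subtype)
    (Subtype.val_injective.comp Subtype.val_injective) fun a => H.subtype.isOfFinAddOrder a.2

theorem AddCommGroup.exists_addEquiv_free_prod_zmod {H : Type*} [AddCommGroup H] [AddGroup.FG H]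
    (htor : IsAddCyclic (torsion H)) :
    ∃ (k N : ℕ) (_ : NeZero N), Nonempty (H ≃+ (Fin k →₀ ℤ) × ZMod N) := by
  classical
  obtain ⟨k, ι, _, p, hp, e, ⟨eH⟩⟩ := equiv_free_prod_directSum_zmod H
  have : ∀ i, NeZero (p i ^ e i) := fun i => ⟨pow_ne_zero _ (hp i).ne_zero⟩
  let D := DirectSum ι fun i => ZMod (p i ^ e i)
  have : Fintype D := DFinsupp.fintype
  let f : D →+ H := eH.symm.toAddMonoidHom.comp (AddMonoidHom.inr _ _)
  have hD : IsAddCyclic D := isAddCyclic_of_injective_of_isOfFinAddOrder htor f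
    (fun a b h => congrArg Prod.snd (eH.symm.injective h))
    fun a => f.isOfFinAddOrder (isOfFinAddOrder_of_finite a)
  exact ⟨k, Nat.card D, ⟨Nat.card_pos.ne'⟩,
    ⟨eH.trans ((AddEquiv.refl _).prodCongr (zmodAddCyclicAddEquiv hD).symm)⟩⟩

namespace AddMonoidAlgebra

variable {k A B : Type*} [CommSemiring k] [AddCommMonoid A]

noncomputable def prodAddChar [AddMonoid B] (ψ : AddChar B k) : AddChar (A × B) (AddMonoidAlgebra k A) where
  toFun p := single p.1 (ψ p.2)
  map_zero_eq_one' := by simp [one_def]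
  map_add_eq_mul' a b := by simp [single_mul_single, AddChar.map_add_eq_mul]

theorem prodAddChar_injective [AddGroup B] [Nontrivial k] {ψ : AddChar B k}
    (hψ : Injective ψ) : Injective (prodAddChar (A := A) ψ) := by
  intro a b h
  rcases single_inj.1 h with ⟨h1, h2⟩ | ⟨h0, -⟩
  · exact Prod.ext h1 (hψ h2)
  · exact absurd h0 (ψ.val_isUnit a.2).ne_zero

end AddMonoidAlgebra

theorem AddCommGroup.exists_injective_addChar {H : Type*} [AddCommGroup H] [AddGroup.FG H]
    (htor : IsAddCyclic (torsion H)) :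
    ∃ (K : Type) (_ : Field K) (_ : CharZero K) (ψ : AddChar H K), Injective ψ := by
  obtain ⟨k, N, _, ⟨e⟩⟩ := exists_addEquiv_free_prod_zmod htor
  let R := AddMonoidAlgebra ℂ (Fin k →₀ ℤ)
  let K := FractionRing R
  have : CharZero R := charZero_of_injective_ringHom (f := AddMonoidAlgebra.singleZeroRingHom)
    AddMonoidAlgebra.single_right_injective
  refine ⟨K, inferInstance, inferInstance, (algebraMap R K).toMonoidHom.compAddChar
    ((AddMonoidAlgebra.prodAddChar ZMod.stdAddChar).compAddMonoidHom e.toAddMonoidHom), ?_⟩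
  exact (IsFractionRing.injective R K).comp
    ((AddMonoidAlgebra.prodAddChar_injective ZMod.injective_stdAddChar).comp e.injective)

theorem exists_perm_injective_prod {K : Type*} [Field K] [CharZero K] {L n : ℕ} (hL : Odd L)
    (x : Fin (L + 1) → Fin n → K) (hx : ∀ i, Injective (x i))
    (hodd : ∀ j, Odd (orderOf (x (Fin.last L) j))) :
    ∃ π : Fin (L + 1) → Perm (Fin n), Injective fun j => ∏ i, x i (π i j) := by
  have hne : (vandermonde (x (Fin.last L))).permanent *
      ∏ i : Fin L, (vandermonde (x i.castSucc)).det ≠ 0 :=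
    mul_ne_zero (permanent_vandermonde_ne_zero_of_odd_orderOf (hx _) hodd)
      (prod_ne_zero_iff.2 fun i _ => det_vandermonde_ne_zero_iff.2 (hx _))
  rw [← sum_prod_sign_mul_det_vandermonde hL] at hne
  obtain ⟨π, -, hπ⟩ := exists_ne_zero_of_sum_ne_zero hne
  refine ⟨Fin.lastCases 1 π, ?_⟩
  convert det_vandermonde_ne_zero_iff.1 (right_ne_zero_of_mul hπ) using 2 with j
  simp [Fin.prod_univ_castSucc, mul_comm]

/-- Corollary 1.2: m even, all elements of the last set of odd order. -/
theorem stmt7 {G : Type*} [AddCommGroup G]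
    (htor : IsAddCyclic (AddCommGroup.torsion G))
    (m n : ℕ) (hm : Even m) (hmpos : 0 < m)
    (A : Fin m → Finset G) (hcard : ∀ i, (A i).card = n)
    (hodd : ∀ x ∈ A ⟨m - 1, by omega⟩, Odd (addOrderOf x)) :
    ∃ a : Fin m → Fin n → G,
      (∀ i, Function.Injective (a i) ∧ ∀ j, a i j ∈ A i) ∧
      Function.Injective fun j : Fin n => ∑ i, a i j := by
  obtain ⟨L, rfl⟩ : ∃ L, m = L + 1 := ⟨m - 1, by omega⟩
  have hL : Odd L := by simpa [Nat.even_add_one] using hm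
  let H := AddSubgroup.closure (⋃ i, (A i : Set G))
  have : AddGroup.FG H := AddGroup.closure_finite_fg _
  obtain ⟨K, _, _, ψ, hψ⟩ := exists_injective_addChar (H.isAddCyclic_torsion htor)
  let e (i : Fin (L + 1)) : Fin n ≃ A i := ((A i).equivFinOfCardEq (hcard i)).symm
  have hmem : ∀ i j, (e i j : G) ∈ H := fun i j =>
    AddSubgroup.subset_closure (Set.mem_iUnion.2 ⟨i, (e i j).2⟩)
  let x (i : Fin (L + 1)) (j : Fin n) : K := ψ ⟨e i j, hmem i j⟩
  have hx : ∀ i, Injective (x i) := fun i j₁ j₂ h =>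
    (e i).injective (Subtype.ext (congrArg Subtype.val (hψ h) :))
  obtain ⟨π, hπ⟩ := exists_perm_injective_prod hL x hx fun j => by
    rw [AddChar.orderOf_apply_of_injective hψ, ← AddSubgroup.addOrderOf_coe]
    exact hodd _ (e _ j).2
  refine ⟨fun i j => e i (π i j), fun i => ⟨Subtype.val_injective.comp
    ((e i).injective.comp (π i).injective), fun j => (e i _).2⟩, fun j₁ j₂ h => hπ ?_⟩
  simp only [x, ← AddChar.map_sum_eq_prod]
  exact congrArg ψ (Subtype.ext (by simpa using h))
end

section
/- Let R be a commutative ring with identity, a_{ij} ∈ R for 1 ≤ i,j ≤ n, and let k, l₁,…,l_n, m₁,…,m_n be nonnegative integers with N = kn − ∑_{i=1}^n (l_i + m_i) ≥ 0. Then the coefficient of x₁^k⋯x_n^k in per((a_{ij} x_j^{l_i})) · det((x_j^{m_i})) · (x₁+⋯+x_n)^N equals the coefficient of x₁^k⋯x_n^k in per((a_{ij} x_j^{m_i})) · det((x_j^{l_i})) · (x₁+⋯+x_n)^N. -/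
open MvPolynomial

/-- The permanent of a square matrix. -/
def perMatrix {n : ℕ} {S : Type*} [CommRing S] (M : Matrix (Fin n) (Fin n) S) : S :=
  ∑ σ : Equiv.Perm (Fin n), ∏ i, M i (σ i)

/-!
Expanding the permanent and the determinant, each side becomes a signed sum over pairs of
permutations `(σ, τ)` of the coefficient of `(x₁ ⋯ xₙ)^k` in
`(∏ᵢ x_{σ i}^{l i}) (∏ᵢ x_{τ i}^{m i}) (∑ₛ xₛ)^N` (with `l` and `m` exchanged on the right).
Since `(x₁ ⋯ xₙ)^k` and `∑ₛ xₛ` are symmetric, this coefficient does not change when the same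
permutation of the variables is applied to `σ` and to `τ`. Relabelling by `στ⁻¹` turns the pair
`(τ, σ)` into `(σ, στ⁻¹σ)`, and `τ ↦ στ⁻¹σ` is a sign-preserving involution, which matches the
terms of the two sides.
-/

open Equiv

section Rename

variable {R ι : Type*} [CommSemiring R] [Fintype ι]

theorem Finsupp.mapDomain_equivFunOnFinite_const (e : Perm ι) (k : ℕ) :
    Finsupp.mapDomain e (Finsupp.equivFunOnFinite.symm fun _ : ι => k) =
      Finsupp.equivFunOnFinite.symm fun _ => k := by
  ext j
  simp [Finsupp.mapDomain_equiv_apply]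

theorem MvPolynomial.coeff_const_rename_perm (e : Perm ι) (k : ℕ) (p : MvPolynomial ι R) :
    coeff (Finsupp.equivFunOnFinite.symm fun _ => k) (rename e p) =
      coeff (Finsupp.equivFunOnFinite.symm fun _ => k) p := by
  have h := coeff_rename_mapDomain e e.injective p (Finsupp.equivFunOnFinite.symm fun _ => k)
  rwa [Finsupp.mapDomain_equivFunOnFinite_const] at h

theorem MvPolynomial.rename_perm_sum_X (e : Perm ι) :
    rename e (∑ s, X s : MvPolynomial ι R) = ∑ s, X s := by
  simp only [map_sum, rename_X]
  exact Equiv.sum_comp e X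

theorem MvPolynomial.rename_prod_X_pow (e ρ : Perm ι) (l : ι → ℕ) :
    rename e (∏ i, X (ρ i) ^ l i : MvPolynomial ι R) = ∏ i, X (e (ρ i)) ^ l i := by
  simp only [map_prod, map_pow, rename_X]

theorem MvPolynomial.coeff_const_prod_X_pow_mul_perm (k N : ℕ) (l m : ι → ℕ) (e ρ τ : Perm ι) :
    coeff (Finsupp.equivFunOnFinite.symm fun _ => k)
      ((∏ i, X (e (ρ i)) ^ l i) * (∏ i, X (e (τ i)) ^ m i) * (∑ s, X s) ^ N : MvPolynomial ι R) =
    coeff (Finsupp.equivFunOnFinite.symm fun _ => k)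
      ((∏ i, X (ρ i) ^ l i) * (∏ i, X (τ i) ^ m i) * (∑ s, X s) ^ N) := by
  rw [← coeff_const_rename_perm e k ((∏ i, X (ρ i) ^ l i) * (∏ i, X (τ i) ^ m i) * _)]
  simp only [map_mul, map_pow, rename_perm_sum_X, rename_prod_X_pow]

end Rename

section Expansion

variable {R : Type*} [CommRing R] {n : ℕ}

theorem perMatrix_of_C_mul_X_pow (a : Fin n → Fin n → R) (l : Fin n → ℕ) :
    perMatrix (Matrix.of fun i j => (C (a i j) * X j ^ l i : MvPolynomial (Fin n) R)) =
      ∑ σ : Perm (Fin n), C (∏ i, a i (σ i)) * ∏ i, X (σ i) ^ l i := by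
  refine Finset.sum_congr rfl fun σ _ => ?_
  simp only [Matrix.of_apply, map_prod, Finset.prod_mul_distrib]

theorem Matrix.det_apply_row {S ι : Type*} [CommRing S] [Fintype ι] [DecidableEq ι]
    (M : Matrix ι ι S) : M.det = ∑ σ : Perm ι, Perm.sign σ • ∏ i, M i (σ i) := by
  rw [← det_transpose, det_apply]
  rfl

theorem coeff_perMatrix_mul_det_mul_sum_X_pow (k N : ℕ) (a : Fin n → Fin n → R)
    (l m : Fin n → ℕ) :
    coeff (Finsupp.equivFunOnFinite.symm fun _ => k)
      (perMatrix (Matrix.of fun i j => (C (a i j) * X j ^ l i : MvPolynomial (Fin n) R)) *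
        (Matrix.of fun i j => (X j ^ m i : MvPolynomial (Fin n) R)).det * (∑ s, X s) ^ N) =
    ∑ σ : Perm (Fin n), ∑ τ : Perm (Fin n), (Perm.sign τ : ℤ) * (∏ i, a i (σ i)) *
      coeff (Finsupp.equivFunOnFinite.symm fun _ => k)
        ((∏ i, X (σ i) ^ l i) * (∏ i, X (τ i) ^ m i) * (∑ s, X s) ^ N) := by
  rw [perMatrix_of_C_mul_X_pow, Matrix.det_apply_row, Finset.sum_mul_sum,
    Finset.sum_mul, coeff_sum]
  refine Finset.sum_congr rfl fun σ _ => ?_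
  rw [Finset.sum_mul, coeff_sum]
  refine Finset.sum_congr rfl fun τ _ => ?_
  rw [Units.smul_def, zsmul_eq_mul, ← coeff_C_mul]
  congr 1
  simp only [Matrix.of_apply, map_mul, map_intCast]
  ring

end Expansion

theorem stmt15_general {R : Type*} [CommRing R] (n k : ℕ)
    (a : Fin n → Fin n → R) (l m : Fin n → ℕ) (N : ℕ) :
    MvPolynomial.coeff (Finsupp.equivFunOnFinite.symm fun _ : Fin n => k)
      (perMatrix (Matrix.of fun i j : Fin n => (C (a i j) * X j ^ l i :
          MvPolynomial (Fin n) R)) *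
        Matrix.det (Matrix.of fun i j : Fin n => (X j ^ m i : MvPolynomial (Fin n) R)) *
        (∑ s : Fin n, X s) ^ N)
      =
    MvPolynomial.coeff (Finsupp.equivFunOnFinite.symm fun _ : Fin n => k)
      (perMatrix (Matrix.of fun i j : Fin n => (C (a i j) * X j ^ m i :
          MvPolynomial (Fin n) R)) *
        Matrix.det (Matrix.of fun i j : Fin n => (X j ^ l i : MvPolynomial (Fin n) R)) *
        (∑ s : Fin n, X s) ^ N) := by
  rw [coeff_perMatrix_mul_det_mul_sum_X_pow, coeff_perMatrix_mul_det_mul_sum_X_pow]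
  refine Finset.sum_congr rfl fun σ _ => ?_
  have hinv : Function.Involutive fun τ : Perm (Fin n) => σ * τ⁻¹ * σ := fun τ => by group
  refine (Equiv.sum_comp hinv.toPerm _).symm.trans (Finset.sum_congr rfl fun τ _ => ?_)
  have hsign : Perm.sign (σ * τ⁻¹ * σ) = Perm.sign τ := by
    simp only [Perm.sign_mul, Perm.sign_inv, mul_right_comm _ _ (Perm.sign σ), Int.units_mul_self,
      one_mul]
  simp only [Function.Involutive.coe_toPerm, hsign]
  congr 1
  rw [mul_comm (∏ i, X (σ i) ^ m i), ← coeff_const_prod_X_pow_mul_perm k N l m (σ * τ⁻¹) τ σ]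
  simp only [Perm.mul_apply, Perm.coe_inv, symm_apply_apply]

/-- Theorem 3.3(ii), equation (3.6). -/
theorem stmt15 {R : Type*} [CommRing R] (n k : ℕ)
    (a : Fin n → Fin n → R) (l m : Fin n → ℕ) (N : ℕ)
    (hN : N = k * n - ∑ i, (l i + m i)) (hge : ∑ i, (l i + m i) ≤ k * n) :
    MvPolynomial.coeff (Finsupp.equivFunOnFinite.symm fun _ : Fin n => k)
      (perMatrix (Matrix.of fun i j : Fin n => (C (a i j) * X j ^ l i :
          MvPolynomial (Fin n) R)) *
        Matrix.det (Matrix.of fun i j : Fin n => (X j ^ m i : MvPolynomial (Fin n) R)) *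
        (∑ s : Fin n, X s) ^ N)
      =
    MvPolynomial.coeff (Finsupp.equivFunOnFinite.symm fun _ : Fin n => k)
      (perMatrix (Matrix.of fun i j : Fin n => (C (a i j) * X j ^ m i :
          MvPolynomial (Fin n) R)) *
        Matrix.det (Matrix.of fun i j : Fin n => (X j ^ l i : MvPolynomial (Fin n) R)) *
        (∑ s : Fin n, X s) ^ N) :=
  stmt15_general n k a l m N
end
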